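/- Fix nonnegative integers a, b, c. Then there exists a constant C > 0 (depending only on (a,b,c)) such that for every ρ ≥ 1 and every failure-probability solution p for parameter ρ: |p(a,b,c) − binom(c,2)/ρ| ≤ C/ρ². In particular, for c ∈ {0,1} one has p(a,b,c) ≤ C/ρ², and for c ≥ 2 the failure probability equals binom(c,2)/ρ up to an error of order ρ^{−2}. -/

import Mathlib

/-!
At `(a, b, c + 1)` the recursion reads
`ρ(c+1)/2 · (p(a,b,c+1) - p(a+1,b+1,c)) = binom(c+1,2) + S - (binom(c+1,2) + R) · p(a,b,c+1)`,
where `0 ≤ S ≤ R` collects the half-fragment coalescence terms. The right side is bounded, so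
induction on `c` gives `p = O(ρ⁻¹)` uniformly in the solution. Feeding this back, `S` and
`p(a,b,c+1)` on the right are `O(ρ⁻¹)`, so each recombination step `c ↦ c + 1` raises `p` by
`c/ρ + O(ρ⁻²)`; summing from `p(·,·,0) = 0` gives `binom(c,2)/ρ + O(ρ⁻²)`.
-/

open scoped BigOperators

/-- A function `p : ℕ³ → [0,1]` is a failure-probability solution for parameter `ρ`:
it vanishes when there are no full fragments, and satisfies the first-step
recursion of the two-locus ancestral recombination graph.  Terms whose
coefficients contain a factor `a` (resp. `b`) vanish automatically when
`a = 0` (resp. `b = 0`) since the coefficients are `0`. -/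
def IsFailureSolution (ρ : ℝ) (p : ℕ → ℕ → ℕ → ℝ) : Prop :=
  (∀ a b c, 0 ≤ p a b c ∧ p a b c ≤ 1) ∧
  (∀ a b, p a b 0 = 0) ∧
  (∀ a b c : ℕ, 1 ≤ c →
    (ρ * c / 2 + (c.choose 2 : ℝ) +
        ((a : ℝ) * b + (a : ℝ) * c + (b : ℝ) * c + (a.choose 2 : ℝ) + (b.choose 2 : ℝ)))
        * p a b c
      = ρ * c / 2 * p (a + 1) (b + 1) (c - 1)
        + (a : ℝ) * (b : ℝ) * p (a - 1) (b - 1) (c + 1)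
        + (a : ℝ) * ((a : ℝ) + 2 * (c : ℝ) - 1) / 2 * p (a - 1) b c
        + (b : ℝ) * ((b : ℝ) + 2 * (c : ℝ) - 1) / 2 * p a (b - 1) c
        + (c.choose 2 : ℝ))

open Asymptotics Filter

noncomputable section

/-- `R(a,b,c)`, written as the sum of the rates of the three kinds of half-fragment coalescence. -/
def halfCoalescenceRate (a b c : ℕ) : ℝ :=
  a * b + a * (a + 2 * c - 1) / 2 + b * (b + 2 * c - 1) / 2

def halfCoalescenceTerm (p : ℕ → ℕ → ℕ → ℝ) (a b c : ℕ) : ℝ :=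
  a * b * p (a - 1) (b - 1) (c + 1) + a * (a + 2 * c - 1) / 2 * p (a - 1) b c
    + b * (b + 2 * c - 1) / 2 * p a (b - 1) c

/-- Bounds `O(ρ⁻ᵏ)` along `𝓟 failureSolutions` are bounds uniform in `ρ ≥ 1` and in the
solution. -/
def failureSolutions : Set (ℝ × (ℕ → ℕ → ℕ → ℝ)) :=
  {x | 1 ≤ x.1 ∧ IsFailureSolution x.1 x.2}

end

lemma halfCoalescenceRate_eq (a b c : ℕ) :
    halfCoalescenceRate a b c = a * b + a * c + b * c + a.choose 2 + b.choose 2 := by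
  rw [halfCoalescenceRate, Nat.cast_choose_two, Nat.cast_choose_two]
  ring

lemma coalescence_coeff_nonneg (a c : ℕ) : 0 ≤ (a : ℝ) * (a + 2 * c - 1) / 2 := by
  rcases a with _ | a
  · simp
  · push_cast
    ring_nf
    positivity

namespace IsFailureSolution

variable {ρ : ℝ} {p : ℕ → ℕ → ℕ → ℝ}

lemma recursion_succ (hp : IsFailureSolution ρ p) (a b c : ℕ) :
    ρ * (c + 1) / 2 * (p a b (c + 1) - p (a + 1) (b + 1) c)
      = (c + 1).choose 2 + halfCoalescenceTerm p a b (c + 1)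
        - ((c + 1).choose 2 + halfCoalescenceRate a b (c + 1)) * p a b (c + 1) := by
  have h := hp.2.2 a b (c + 1) (Nat.le_add_left 1 c)
  rw [Nat.add_sub_cancel, ← halfCoalescenceRate_eq] at h
  rw [halfCoalescenceTerm]
  push_cast at h ⊢
  linear_combination h

lemma halfCoalescenceTerm_le_rate (hp : IsFailureSolution ρ p) (a b c : ℕ) :
    halfCoalescenceTerm p a b c ≤ halfCoalescenceRate a b c := by
  unfold halfCoalescenceTerm halfCoalescenceRate
  have := mul_le_of_le_one_right (coalescence_coeff_nonneg a c) (hp.1 (a - 1) b c).2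
  have := mul_le_of_le_one_right (coalescence_coeff_nonneg b c) (hp.1 a (b - 1) c).2
  have := mul_le_of_le_one_right (by positivity : (0 : ℝ) ≤ a * b) (hp.1 (a - 1) (b - 1) (c + 1)).2
  linarith

lemma succ_sub_le (hp : IsFailureSolution ρ p) (hρ : 0 < ρ) (a b c : ℕ) :
    p a b (c + 1) - p (a + 1) (b + 1) c
      ≤ 2 * ((c + 1).choose 2 + halfCoalescenceRate a b (c + 1)) / (c + 1) * ρ⁻¹ := by
  have hrec := hp.recursion_succ a b c
  have hS := hp.halfCoalescenceTerm_le_rate a b (c + 1)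
  have hloss : 0 ≤ ((c + 1).choose 2 + halfCoalescenceRate a b (c + 1)) * p a b (c + 1) :=
    mul_nonneg (by rw [halfCoalescenceRate_eq]; positivity) (hp.1 a b (c + 1)).1
  rw [← div_eq_mul_inv, div_div, le_div_iff₀ (by positivity)]
  linarith

lemma succ_sub_choose_div_eq (hp : IsFailureSolution ρ p) (hρ : ρ ≠ 0) (a b c : ℕ) :
    p a b (c + 1) - (c + 1).choose 2 / ρ
      = (p (a + 1) (b + 1) c - c.choose 2 / ρ)
        + ρ⁻¹ * (2 / (c + 1) * (halfCoalescenceTerm p a b (c + 1)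
          - ((c + 1).choose 2 + halfCoalescenceRate a b (c + 1)) * p a b (c + 1))) := by
  have hrec := hp.recursion_succ a b c
  simp only [Nat.cast_choose_two] at hrec ⊢
  field_simp
  push_cast at hrec ⊢
  linear_combination 4 * hrec

end IsFailureSolution

lemma isBigO_inv_solution (a b c : ℕ) :
    (fun x : ℝ × (ℕ → ℕ → ℕ → ℝ) => x.2 a b c) =O[𝓟 failureSolutions] fun x => x.1⁻¹ := by
  induction c generalizing a b with
  | zero =>
    refine (isBigO_zero _ _).congr' ?_ EventuallyEq.rfl
    exact eventually_principal.2 fun x hx => (hx.2.2.1 a b).symm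
  | succ c ih =>
    set K : ℝ := 2 * ((c + 1).choose 2 + halfCoalescenceRate a b (c + 1)) / (c + 1)
    have hbound : (fun x => ‖x.2 a b (c + 1)‖)
        ≤ᶠ[𝓟 failureSolutions] fun x => x.2 (a + 1) (b + 1) c + K * x.1⁻¹ := by
      refine eventually_principal.2 fun x ⟨hρ, hp⟩ => ?_
      dsimp only
      rw [Real.norm_of_nonneg (hp.1 _ _ _).1]
      linarith [hp.succ_sub_le (by linarith) a b c]
    exact (IsBigO.of_norm_eventuallyLE hbound).trans
      ((ih _ _).add ((isBigO_refl _ _).const_mul_left K))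

lemma isBigO_inv_halfCoalescenceTerm (a b c : ℕ) :
    (fun x : ℝ × (ℕ → ℕ → ℕ → ℝ) => halfCoalescenceTerm x.2 a b c)
      =O[𝓟 failureSolutions] fun x => x.1⁻¹ := by
  unfold halfCoalescenceTerm
  exact (((isBigO_inv_solution _ _ _).const_mul_left _).add
    ((isBigO_inv_solution _ _ _).const_mul_left _)).add
    ((isBigO_inv_solution _ _ _).const_mul_left _)

lemma isBigO_inv_sq_solution_sub_choose_div (a b c : ℕ) :
    (fun x : ℝ × (ℕ → ℕ → ℕ → ℝ) => x.2 a b c - c.choose 2 / x.1)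
      =O[𝓟 failureSolutions] fun x => x.1⁻¹ ^ 2 := by
  induction c generalizing a b with
  | zero =>
    refine (isBigO_zero _ _).congr' ?_ EventuallyEq.rfl
    exact eventually_principal.2 fun x hx => by simp [hx.2.2.1 a b]
  | succ c ih =>
    have hrem := ((isBigO_inv_halfCoalescenceTerm a b (c + 1)).sub
      ((isBigO_inv_solution a b (c + 1)).const_mul_left
        ((c + 1).choose 2 + halfCoalescenceRate a b (c + 1)))).const_mul_left (2 / (c + 1))
    refine ((ih (a + 1) (b + 1)).add
      (((isBigO_refl _ _).mul hrem).congr_right fun x => (sq _).symm)).congr' ?_ EventuallyEq.rfl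
    exact eventually_principal.2 fun x ⟨hρ, hp⟩ =>
      (hp.succ_sub_choose_div_eq (by positivity) a b c).symm

/-- The failure probability equals `binom(c,2)/ρ` up to an error of order `ρ⁻²`;
in particular for `c ∈ {0,1}` it is `O(ρ⁻²)`. -/
theorem failure_probability_asymptotics (a b c : ℕ) :
    ∃ C : ℝ, 0 < C ∧ ∀ ρ : ℝ, 1 ≤ ρ → ∀ p : ℕ → ℕ → ℕ → ℝ,
      IsFailureSolution ρ p →
        |p a b c - (c.choose 2 : ℝ) / ρ| ≤ C / ρ ^ 2 ∧
        (c ≤ 1 → p a b c ≤ C / ρ ^ 2) := by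
  obtain ⟨C, hC, hbound⟩ := (isBigO_inv_sq_solution_sub_choose_div a b c).exists_pos
  refine ⟨C, hC, fun ρ hρ p hp => ?_⟩
  have habs : |p a b c - c.choose 2 / ρ| ≤ C / ρ ^ 2 := by
    have h := isBigOWith_principal.1 hbound (ρ, p) ⟨hρ, hp⟩
    rwa [Real.norm_eq_abs, norm_pow, norm_inv, Real.norm_of_nonneg (by linarith), inv_pow,
      ← div_eq_mul_inv] at h
  refine ⟨habs, fun hc => ?_⟩
  have hchoose : c.choose 2 = 0 := Nat.choose_eq_zero_of_lt (by omega)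
  simpa [hchoose] using (le_abs_self _).trans habs
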